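/- arXiv:2311.15191 — 3 statements merged into one kernel-verified Lean document; each statement's English description precedes it below -/
import Mathlib

section
/- For a sublattice L of Γ_Z and a group homomorphism ρ : L → K^×, the ideal I(L,ρ) = ⟨x^α − c(α)^{-1}ρ(α) | α ∈ L⟩ is a proper binomial ideal of the quantum torus T_q. -/
/-- A quantum torus over `K` attached to a multiplicatively skew-symmetric matrix `q`:
an algebra `T` with basis `(x^α)_{α ∈ ℤⁿ}` and multiplication
`x^α x^β = d(α,β) x^{α+β}` where `d(α,β) = ∏_{i>j} q_{ij}^{α_i β_j}`. -/
structure QuantumTorus (K : Type) [Field K] (n : ℕ) (T : Type) [Ring T] [Algebra K T] where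
  q : Fin n → Fin n → Kˣ
  q_diag : ∀ i, q i i = 1
  q_skew : ∀ i j, q j i = (q i j)⁻¹
  d : (Fin n → ℤ) → (Fin n → ℤ) → Kˣ
  d_eq : ∀ α β, d α β = ∏ i : Fin n, ∏ j : Fin n,
      if (j : ℕ) < (i : ℕ) then q i j ^ (α i * β j) else 1
  x : (Fin n → ℤ) → T
  basis : Module.Basis (Fin n → ℤ) K T
  basis_eq : ∀ α, basis α = x α
  x_mul : ∀ α β, x α * x β = ((d α β : K)) • x (α + β)
  x_zero : x 0 = 1

namespace QuantumTorus

variable {K : Type} [Field K] {n : ℕ} {T : Type} [Ring T] [Algebra K T]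

/-- `α` lies in the central lattice `Γ_Z`, i.e. `x^α` is central in `T_q`. -/
def IsCentral (Q : QuantumTorus K n T) (α : Fin n → ℤ) : Prop :=
  ∀ t : T, Q.x α * t = t * Q.x α

/-- A binomial ideal: a two-sided ideal generated by nonzero elements
`λ x^α + μ x^β`. -/
def IsBinomialIdeal (Q : QuantumTorus K n T) (J : TwoSidedIdeal T) : Prop :=
  ∃ S : Set T,
    (∀ b ∈ S, b ≠ 0 ∧ ∃ (l m : K) (α β : Fin n → ℤ), b = l • Q.x α + m • Q.x β) ∧
    J = TwoSidedIdeal.span S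

/-- The scalars `c : Γ_Z → Kˣ` arising from a fixed algebra isomorphism
`φ : KΓ_Z ≅ Z(T_q)`, `φ(z_γ) = c(γ) x^γ`; the defining property is that
`γ ↦ c(γ) x^γ` is multiplicative on the central lattice and `c 0 = 1`. -/
def IsGoodC (Q : QuantumTorus K n T) (c : (Fin n → ℤ) → Kˣ) : Prop :=
  c 0 = 1 ∧ ∀ α β : Fin n → ℤ, Q.IsCentral α → Q.IsCentral β →
    (((c α : K)) • Q.x α) * (((c β : K)) • Q.x β) = ((c (α + β) : K)) • Q.x (α + β)

/-- The binomial ideal `I(L,ρ) = ⟨ x^α - c(α)⁻¹ ρ(α) : α ∈ L ⟩`. -/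
def binIdeal (Q : QuantumTorus K n T) (c : (Fin n → ℤ) → Kˣ)
    (L : AddSubgroup (Fin n → ℤ)) (ρ : L →+ Additive Kˣ) : TwoSidedIdeal T :=
  TwoSidedIdeal.span
    {t | ∃ α : L, t = Q.x (α : Fin n → ℤ) -
      ((((c (α : Fin n → ℤ))⁻¹ * Additive.toMul (ρ α) : Kˣ) : K)) • (1 : T)}

end QuantumTorus

/-- A (two-sided) prime ideal of a possibly noncommutative ring. -/
def IsPrimeTSI {R : Type} [Ring R] (P : TwoSidedIdeal R) : Prop :=
  P ≠ ⊤ ∧ ∀ a b : R, (∀ r : R, a * r * b ∈ P) → a ∈ P ∨ b ∈ P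

/-- The prime radical of a two-sided ideal: the intersection of the prime
two-sided ideals containing it. -/
def primeRadical {R : Type} [Ring R] (I : TwoSidedIdeal R) : TwoSidedIdeal R :=
  sInf {P : TwoSidedIdeal R | IsPrimeTSI P ∧ I ≤ P}

/-!
The generators `x^α - c(α)⁻¹ρ(α)` are central, so a linear form `f` on `T_q` kills the ideal as
soon as it kills every left multiple `t (x^α - c(α)⁻¹ρ(α))`; if moreover `f 1 ≠ 0`, the ideal
is proper. Such a form is `f(x^β) = μ(β)`, where `μ : ℤⁿ → Kˣ` satisfies
`d(β,α) μ(β+α) = c(α)⁻¹ρ(α) μ(β)` for `α ∈ L`. Normalising `μ` to `1` on a set of coset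
representatives of `L`, this recursion determines `μ`, and it is consistent because
`c(α+β) = c(α) c(β) d(α,β)` on the central lattice and `d` is bimultiplicative.
-/

namespace TwoSidedIdeal

variable {R M : Type*} [Ring R] [AddCommGroup M]

theorem span_ne_top_of_map_mul_eq_zero {S : Set R} (f : R →+ M)
    (hS : ∀ s ∈ S, ∀ t, s * t = t * s) (hf : ∀ s ∈ S, ∀ t, f (t * s) = 0) (h1 : f 1 ≠ 0) :
    span S ≠ ⊤ := by
  intro htop
  have hspan : ∀ x ∈ span S, ∀ u v, f (u * x * v) = 0 := by
    intro x hx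
    induction hx using span_induction with
    | mem s hs => intro u v; rw [mul_assoc, hS s hs, ← mul_assoc]; exact hf s hs _
    | zero => simp
    | add x y _ _ hx hy => intro u v; rw [mul_add, add_mul, map_add, hx, hy, add_zero]
    | neg x _ hx => intro u v; rw [mul_neg, neg_mul, map_neg, hx, neg_zero]
    | left_absorb a x _ hx => intro u v; rw [← mul_assoc]; exact hx _ _
    | right_absorb b x _ hx => intro u v; rw [← mul_assoc, mul_assoc _ b]; exact hx _ _
  exact h1 (by simpa using hspan 1 (htop ▸ mem_top R) 1 1)

theorem span_diff_zero (S : Set R) : span (S \ {0}) = span S := by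
  refine le_antisymm (span_mono Set.sdiff_subset) (span_le.mpr fun s hs => ?_)
  by_cases h0 : s = 0
  · rw [h0]; exact zero_mem _
  · exact subset_span ⟨hs, h0⟩

end TwoSidedIdeal

namespace QuantumTorus

variable {K : Type} [Field K] {n : ℕ} {T : Type} [Ring T] [Algebra K T]
  (Q : QuantumTorus K n T)

theorem smul_x_inj {γ : Fin n → ℤ} {k k' : K} : k • Q.x γ = k' • Q.x γ ↔ k = k' := by
  refine ⟨fun h => ?_, fun h => h ▸ rfl⟩
  simpa [← Q.basis_eq] using congrArg (fun t => Q.basis.repr t γ) h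

theorem d_add_left (α β γ : Fin n → ℤ) : Q.d (α + β) γ = Q.d α γ * Q.d β γ := by
  simp only [Q.d_eq, ← Finset.prod_mul_distrib]
  refine Finset.prod_congr rfl fun i _ => Finset.prod_congr rfl fun j _ => ?_
  split_ifs <;> simp [add_mul, zpow_add]

theorem d_add_right (α β γ : Fin n → ℤ) : Q.d α (β + γ) = Q.d α β * Q.d α γ := by
  simp only [Q.d_eq, ← Finset.prod_mul_distrib]
  refine Finset.prod_congr rfl fun i _ => Finset.prod_congr rfl fun j _ => ?_
  split_ifs <;> simp [mul_add, zpow_add]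

theorem IsGoodC.map_add {Q : QuantumTorus K n T} {c : (Fin n → ℤ) → Kˣ} (hc : Q.IsGoodC c)
    {α β : Fin n → ℤ} (hα : Q.IsCentral α) (hβ : Q.IsCentral β) :
    c (α + β) = c α * c β * Q.d α β := by
  have h := hc.2 α β hα hβ
  rw [smul_mul_smul_comm, Q.x_mul, smul_smul, smul_x_inj] at h
  ext
  simp [← h, mul_assoc]

variable {Q} in
theorem IsCentral.sub_smul_one_mul_comm {α : Fin n → ℤ} (h : Q.IsCentral α) (k : K) (t : T) :
    (Q.x α - k • 1) * t = t * (Q.x α - k • 1) := by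
  rw [sub_mul, mul_sub, h t, smul_one_mul, mul_smul_one]

variable (c : (Fin n → ℤ) → Kˣ) {L : AddSubgroup (Fin n → ℤ)} (ρ : L →+ Additive Kˣ)

def binScalar (a : L) : Kˣ := (c a)⁻¹ * (ρ a).toMul

variable {c} in
theorem binScalar_add (hc : Q.IsGoodC c) (hL : ∀ α ∈ L, Q.IsCentral α) (s a : L) :
    binScalar c ρ (s + a) * Q.d s a = binScalar c ρ s * binScalar c ρ a := by
  simp only [binScalar, AddSubgroup.coe_add, map_add, toMul_add,
    hc.map_add (hL s s.2) (hL a a.2)]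
  ext
  push_cast
  field_simp

/-- The value of the weight at `r + s`, once it is normalised to `1` at `r`. -/
def shiftScalar (r : Fin n → ℤ) (s : L) : Kˣ := binScalar c ρ s * (Q.d r s)⁻¹

variable {c} in
theorem d_mul_shiftScalar_add (hc : Q.IsGoodC c) (hL : ∀ α ∈ L, Q.IsCentral α)
    (r : Fin n → ℤ) (s a : L) :
    Q.d (r + s) a * Q.shiftScalar c ρ r (s + a) = binScalar c ρ a * Q.shiftScalar c ρ r s := by
  have hs := Q.binScalar_add ρ hc hL s a
  rw [shiftScalar, shiftScalar, AddSubgroup.coe_add, d_add_left, d_add_right,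
    eq_mul_inv_iff_mul_eq.mpr hs]
  ext
  push_cast
  field_simp

noncomputable def weight (β : Fin n → ℤ) : Kˣ :=
  Q.shiftScalar c ρ (β : (Fin n → ℤ) ⧸ L).out
    ⟨-(β : (Fin n → ℤ) ⧸ L).out + β, QuotientAddGroup.eq.mp (QuotientAddGroup.out_eq' _)⟩

theorem weight_eq {β r : Fin n → ℤ} (s : L) (hr : (β : (Fin n → ℤ) ⧸ L).out = r)
    (hs : r + s = β) : Q.weight c ρ β = Q.shiftScalar c ρ r s := by
  subst hr
  exact congrArg _ (Subtype.ext (eq_neg_add_iff_add_eq.mpr hs).symm)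

variable {c} in
theorem d_mul_weight_add (hc : Q.IsGoodC c) (hL : ∀ α ∈ L, Q.IsCentral α)
    (β : Fin n → ℤ) (a : L) :
    Q.d β a * Q.weight c ρ (β + a) = binScalar c ρ a * Q.weight c ρ β := by
  set r := (β : (Fin n → ℤ) ⧸ L).out
  let s : L := ⟨-r + β, QuotientAddGroup.eq.mp (QuotientAddGroup.out_eq' _)⟩
  have hs : r + s = β := add_neg_cancel_left r β
  have hr : ((β + a : Fin n → ℤ) : (Fin n → ℤ) ⧸ L).out = r := by
    rw [QuotientAddGroup.mk_add_of_mem _ a.2]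
  have hsa : r + ↑(s + a) = β + a := by rw [AddSubgroup.coe_add, ← add_assoc, hs]
  rw [Q.weight_eq c ρ s rfl hs, Q.weight_eq c ρ (s + a) hr hsa,
    ← Q.d_mul_shiftScalar_add ρ hc hL r s a, hs]

noncomputable def weightForm : T →ₗ[K] K := Q.basis.constr K fun β => (Q.weight c ρ β : K)

theorem weightForm_x (β : Fin n → ℤ) : Q.weightForm c ρ (Q.x β) = Q.weight c ρ β := by
  rw [← Q.basis_eq]
  exact Q.basis.constr_basis K _ β

variable {c} in
theorem weightForm_mul_sub_binScalar (hc : Q.IsGoodC c) (hL : ∀ α ∈ L, Q.IsCentral α) (a : L)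
    (t : T) : Q.weightForm c ρ (t * (Q.x a - (binScalar c ρ a : K) • 1)) = 0 := by
  have h : (Q.weightForm c ρ).comp
      (LinearMap.mulRight K (Q.x a - (binScalar c ρ a : K) • 1)) = 0 := by
    refine Q.basis.ext fun β => ?_
    rw [LinearMap.comp_apply, LinearMap.mulRight_apply, LinearMap.zero_apply, Q.basis_eq, mul_sub,
      mul_smul_one, Q.x_mul, map_sub, map_smul, map_smul, weightForm_x, weightForm_x, smul_eq_mul,
      smul_eq_mul, sub_eq_zero]
    exact_mod_cast congrArg Units.val (Q.d_mul_weight_add ρ hc hL β a)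
  exact LinearMap.congr_fun h t

end QuantumTorus

/-- For a sublattice `L ≤ Γ_Z` and `ρ ∈ Hom(L, Kˣ)`, the ideal
`I(L,ρ) = ⟨x^α - c(α)⁻¹ ρ(α) : α ∈ L⟩` is a proper binomial ideal of `T_q`. -/
theorem binIdeal_proper_binomial {K : Type} [Field K] {n : ℕ} {T : Type} [Ring T]
    [Algebra K T] (Q : QuantumTorus K n T) (c : (Fin n → ℤ) → Kˣ) (hc : Q.IsGoodC c)
    (L : AddSubgroup (Fin n → ℤ)) (hL : ∀ α ∈ L, Q.IsCentral α)
    (ρ : L →+ Additive Kˣ) :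
    Q.binIdeal c L ρ ≠ ⊤ ∧ Q.IsBinomialIdeal (Q.binIdeal c L ρ) := by
  constructor
  · refine TwoSidedIdeal.span_ne_top_of_map_mul_eq_zero (Q.weightForm c ρ).toAddMonoidHom
      ?_ ?_ ?_
    · rintro _ ⟨a, rfl⟩
      exact (hL a a.2).sub_smul_one_mul_comm _
    · rintro _ ⟨a, rfl⟩ t
      exact Q.weightForm_mul_sub_binScalar ρ hc hL a t
    · simp [← Q.x_zero, Q.weightForm_x]
  · refine ⟨_ \ {0}, ?_, (TwoSidedIdeal.span_diff_zero _).symm⟩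
    rintro _ ⟨⟨a, rfl⟩, h0⟩
    exact ⟨h0, 1, -_, a, 0, by rw [Q.x_zero, one_smul, neg_smul, sub_eq_add_neg]⟩
end

section
/- The map (L,ρ) ↦ I(L,ρ) is a bijection between the set of pairs consisting of a sublattice L of Γ_Z and a homomorphism ρ : L → K^×, and the set of proper binomial ideals of the quantum torus T_q. The inverse sends J to (L,ρ) with L = {α | x^α ∈ K^× + J} and ρ(α) the unique scalar with x^α − c(α)^{-1}ρ(α) ∈ J. -/
/-!
For a pair `(L, ρ)`, the linear functional `ψ` with `ψ(x^γ) = c(γ)⁻¹ρ(γ)` for `γ ∈ L` and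
`ψ(x^γ) = 0` otherwise kills `x^β (x^α - c(α)⁻¹ρ(α))` for every `β`, because `γ ↦ c(γ)x^γ`
is multiplicative on the central lattice and `ρ` is a character. The generators of `I(L,ρ)`
are central, so `ψ` vanishes on `I(L,ρ)`. As `ψ(1) = 1`, the ideal is proper, and
`x^γ - μ ∈ I(L,ρ)` forces `γ ∈ L` and `μ = c(γ)⁻¹ρ(γ)`: the pair is read off the ideal.

Conversely, the monomials are units, so in a proper ideal `J` the scalar `λ` with
`x^α - λ ∈ J` is unique, such `α` are central (the commutator of `x^α - λ` with `x^β` is a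
multiple of `x^{α+β}`) and form a lattice on which `α ↦ c(α)λ` is a character. A nonzero
binomial is a unit times some `x^γ - ν`, so a binomial ideal is generated by its elements
`x^γ - ν`, that is, by the generators of `I(L,ρ)` for this lattice and character.
-/

namespace TwoSidedIdeal

variable {A : Type*} [Ring A] (J : TwoSidedIdeal A)

lemma mul_mem_iff_of_isUnit {u a : A} (hu : IsUnit u) : u * a ∈ J ↔ a ∈ J := by
  refine ⟨fun h => ?_, J.mul_mem_left u a⟩
  simpa [← mul_assoc] using J.mul_mem_left (↑hu.unit⁻¹) _ h

section CommSemiring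

variable {K : Type*} [CommSemiring K] [Algebra K A]

lemma algebra_smul_mem (k : K) {a : A} (h : a ∈ J) : k • a ∈ J := by
  rw [Algebra.smul_def]
  exact J.mul_mem_left _ _ h

lemma mul_sub_smul_one_mem {s t : A} {a b : K} (hs : s - a • 1 ∈ J) (ht : t - b • 1 ∈ J) :
    s * t - (a * b) • 1 ∈ J := by
  have h : s * t - (a * b) • 1 = s * (t - b • 1) + b • (s - a • 1) := by
    rw [mul_sub, smul_sub, mul_smul_comm, mul_one, smul_smul, mul_comm b a]
    abel
  rw [h]
  exact J.add_mem (J.mul_mem_left _ _ ht) (J.algebra_smul_mem b hs)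

end CommSemiring

variable {K : Type*} [Field K] [Algebra K A]

lemma algebra_smul_mem_iff {k : K} (hk : k ≠ 0) {a : A} : k • a ∈ J ↔ a ∈ J := by
  rw [Algebra.smul_def, J.mul_mem_iff_of_isUnit (hk.isUnit.map _)]

lemma eq_of_sub_smul_one_mem (hJ : J ≠ ⊤) {s : A} {a b : K} (ha : s - a • 1 ∈ J)
    (hb : s - b • 1 ∈ J) : a = b := by
  by_contra hab
  have h : (b - a) • (1 : A) ∈ J := by
    simpa [sub_smul] using J.sub_mem ha hb
  exact hJ (J.one_mem_iff.mp ((J.algebra_smul_mem_iff (sub_ne_zero.mpr (Ne.symm hab))).mp h))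

end TwoSidedIdeal

namespace QuantumTorus

variable {K : Type} [Field K] {n : ℕ} {T : Type} [Ring T] [Algebra K T]
variable (Q : QuantumTorus K n T)

lemma smul_x_injective (γ : Fin n → ℤ) : Function.Injective fun k : K => k • Q.x γ :=
  smul_left_injective K (Q.basis_eq γ ▸ Q.basis.ne_zero γ)

lemma isUnit_x (γ : Fin n → ℤ) : IsUnit (Q.x γ) := by
  have hr : Q.x γ * ((Q.d γ (-γ) : K)⁻¹ • Q.x (-γ)) = 1 := by
    rw [mul_smul_comm, Q.x_mul, add_neg_cancel, Q.x_zero, smul_smul,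
      inv_mul_cancel₀ (Units.ne_zero _), one_smul]
  have hl : ((Q.d (-γ) γ : K)⁻¹ • Q.x (-γ)) * Q.x γ = 1 := by
    rw [smul_mul_assoc, Q.x_mul, neg_add_cancel, Q.x_zero, smul_smul,
      inv_mul_cancel₀ (Units.ne_zero _), one_smul]
  exact ⟨⟨_, _, hr, left_inv_eq_right_inv hl hr ▸ hl⟩, rfl⟩

lemma eq_top_of_x_mem (J : TwoSidedIdeal T) {γ : Fin n → ℤ} (h : Q.x γ ∈ J) : J = ⊤ :=
  J.one_mem_iff.mp ((J.mul_mem_iff_of_isUnit (Q.isUnit_x γ)).mp (by rwa [mul_one]))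

lemma eq_top_of_smul_x_mem (J : TwoSidedIdeal T) {k : K} (hk : k ≠ 0) {γ : Fin n → ℤ}
    (h : k • Q.x γ ∈ J) : J = ⊤ :=
  Q.eq_top_of_x_mem J ((J.algebra_smul_mem_iff hk).mp h)

lemma isCentral_of_commute_x {α : Fin n → ℤ} (h : ∀ β, Q.x α * Q.x β = Q.x β * Q.x α) :
    Q.IsCentral α := by
  have hmul : LinearMap.mulLeft K (Q.x α) = LinearMap.mulRight K (Q.x α) :=
    Q.basis.ext fun β => by simpa [Q.basis_eq] using h β
  exact fun t => LinearMap.congr_fun hmul t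

lemma isCentral_of_sub_smul_one_mem {J : TwoSidedIdeal T} (hJ : J ≠ ⊤) {α : Fin n → ℤ}
    {a : K} (h : Q.x α - a • 1 ∈ J) : Q.IsCentral α := by
  refine Q.isCentral_of_commute_x fun β => ?_
  have hcomm : Q.x α * Q.x β - Q.x β * Q.x α = ((Q.d α β : K) - Q.d β α) • Q.x (α + β) := by
    rw [Q.x_mul, Q.x_mul, add_comm β α, sub_smul]
  have hmem : Q.x α * Q.x β - Q.x β * Q.x α ∈ J := by
    convert J.sub_mem (J.mul_mem_right _ (Q.x β) h) (J.mul_mem_left (Q.x β) _ h) using 1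
    simp only [sub_mul, mul_sub, smul_mul_assoc, mul_smul_comm, one_mul, mul_one]
    abel
  rw [← sub_eq_zero]
  by_contra hne
  rw [hcomm] at hne hmem
  exact hJ (Q.eq_top_of_smul_x_mem J (fun h0 => hne (by rw [h0, zero_smul])) hmem)

lemma binomial_eq_isUnit_mul {l : K} (hl : l ≠ 0) (m : K) (α β : Fin n → ℤ) :
    ∃ u : T, IsUnit u ∧
      ∃ (γ : Fin n → ℤ) (ν : K), l • Q.x α + m • Q.x β = u * (Q.x γ - ν • 1) := by
  have he : (Q.d β (α - β) : K) ≠ 0 := Units.ne_zero _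
  refine ⟨(l / Q.d β (α - β)) • Q.x β, ?_, α - β, -(m * Q.d β (α - β) / l), ?_⟩
  · rw [Algebra.smul_def]
    exact ((div_ne_zero hl he).isUnit.map _).mul (Q.isUnit_x β)
  · rw [smul_mul_assoc, mul_sub, Q.x_mul, add_sub_cancel, mul_smul_comm, mul_one, smul_sub,
      smul_smul, smul_smul, sub_eq_add_neg, ← neg_smul]
    congr 2 <;> field_simp

lemma binomial_mem_of_forall_sub_smul_one_mem {I J : TwoSidedIdeal T}
    (hJI : ∀ γ (ν : K), Q.x γ - ν • 1 ∈ J → Q.x γ - ν • 1 ∈ I) {l m : K} {α β : Fin n → ℤ}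
    (h : l • Q.x α + m • Q.x β ∈ J) : l • Q.x α + m • Q.x β ∈ I := by
  wlog hl : l ≠ 0 generalizing l m α β
  · by_cases hm : m = 0
    · simp [not_not.mp hl, hm, I.zero_mem]
    · rw [add_comm] at h ⊢
      exact this h hm
  obtain ⟨u, hu, γ, ν, heq⟩ := Q.binomial_eq_isUnit_mul hl m α β
  rw [heq] at h ⊢
  exact I.mul_mem_left u _ (hJI γ ν ((J.mul_mem_iff_of_isUnit hu).mp h))

variable {Q} in
lemma IsGoodC.c_add {c : (Fin n → ℤ) → Kˣ} (hc : Q.IsGoodC c) {α β : Fin n → ℤ}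
    (hα : Q.IsCentral α) (hβ : Q.IsCentral β) :
    (c (α + β) : K) = c α * c β * Q.d α β := by
  have h := hc.2 α β hα hβ
  rw [smul_mul_assoc, mul_smul_comm, smul_smul, Q.x_mul, smul_smul] at h
  exact (Q.smul_x_injective _ h).symm

abbrev LatticeChar : Type :=
  Σ L : {L : AddSubgroup (Fin n → ℤ) // ∀ α ∈ L, Q.IsCentral α}, (L.1 →+ Additive Kˣ)

section binIdeal

variable (c : (Fin n → ℤ) → Kˣ) {L : AddSubgroup (Fin n → ℤ)} (ρ : L →+ Additive Kˣ)

def genCoeff (α : L) : Kˣ := (c α)⁻¹ * Additive.toMul (ρ α)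

lemma x_sub_genCoeff_mem_binIdeal (α : L) :
    Q.x α - (genCoeff c ρ α : K) • 1 ∈ Q.binIdeal c L ρ :=
  TwoSidedIdeal.subset_span ⟨α, rfl⟩

variable {Q c}

lemma genCoeff_zero (hc : Q.IsGoodC c) : genCoeff c ρ 0 = 1 := by
  simp [genCoeff, hc.1]

lemma genCoeff_add (hc : Q.IsGoodC c) (hL : ∀ α ∈ L, Q.IsCentral α) (α β : L) :
    (genCoeff c ρ (α + β) : K) = (Q.d α β : K)⁻¹ * genCoeff c ρ α * genCoeff c ρ β := by
  simp only [genCoeff, Units.val_mul, Units.val_inv_eq_inv_val, AddSubgroup.coe_add,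
    hc.c_add (hL _ α.2) (hL _ β.2), map_add, toMul_add]
  field_simp

variable (Q c)

open Classical in
noncomputable def binFunctional : T →ₗ[K] K :=
  Q.basis.constr K fun γ => if h : γ ∈ L then (genCoeff c ρ ⟨γ, h⟩ : K) else 0

variable {Q c ρ}

lemma binFunctional_x_of_mem {γ : Fin n → ℤ} (h : γ ∈ L) :
    Q.binFunctional c ρ (Q.x γ) = genCoeff c ρ ⟨γ, h⟩ := by
  rw [← Q.basis_eq, binFunctional, Module.Basis.constr_basis, dif_pos h]

lemma binFunctional_x_of_notMem {γ : Fin n → ℤ} (h : γ ∉ L) :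
    Q.binFunctional c ρ (Q.x γ) = 0 := by
  rw [← Q.basis_eq, binFunctional, Module.Basis.constr_basis, dif_neg h]

lemma binFunctional_one (hc : Q.IsGoodC c) : Q.binFunctional c ρ 1 = 1 := by
  rw [← Q.x_zero, binFunctional_x_of_mem L.zero_mem]
  exact congrArg Units.val (genCoeff_zero ρ hc)

lemma binFunctional_mul_x_sub_genCoeff (hc : Q.IsGoodC c) (hL : ∀ α ∈ L, Q.IsCentral α)
    (α : L) (t : T) : Q.binFunctional c ρ (t * (Q.x α - (genCoeff c ρ α : K) • 1)) = 0 := by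
  suffices (Q.binFunctional c ρ).comp
      (LinearMap.mulRight K (Q.x α - (genCoeff c ρ α : K) • 1)) = 0 from
    LinearMap.congr_fun this t
  refine Q.basis.ext fun β => ?_
  simp only [LinearMap.comp_apply, LinearMap.mulRight_apply, LinearMap.zero_apply, Q.basis_eq,
    mul_sub, mul_smul_comm, mul_one, Q.x_mul, map_sub, map_smul, smul_eq_mul]
  by_cases hβ : β ∈ L
  · rw [binFunctional_x_of_mem (L.add_mem hβ α.2), binFunctional_x_of_mem hβ,
      show (⟨β + α, L.add_mem hβ α.2⟩ : L) = ⟨β, hβ⟩ + α from rfl, genCoeff_add ρ hc hL]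
    field_simp
    ring
  · rw [binFunctional_x_of_notMem (fun h => hβ (by simpa using L.sub_mem h α.2)),
      binFunctional_x_of_notMem hβ]
    simp

lemma binFunctional_eq_zero_of_mem_binIdeal (hc : Q.IsGoodC c) (hL : ∀ α ∈ L, Q.IsCentral α)
    {t : T} (ht : t ∈ Q.binIdeal c L ρ) : Q.binFunctional c ρ t = 0 := by
  rw [binIdeal, TwoSidedIdeal.mem_span_iff_mem_addSubgroup_closure] at ht
  refine (AddSubgroup.closure_le (LinearMap.ker (Q.binFunctional c ρ)).toAddSubgroup).mpr
    ?_ ht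
  rintro _ ⟨_, ⟨r, -, _, ⟨α, rfl⟩, rfl⟩, s, -, rfl⟩
  have hcomm : (Q.x α - (genCoeff c ρ α : K) • 1) * s =
      s * (Q.x α - (genCoeff c ρ α : K) • 1) := by
    rw [sub_mul, mul_sub, hL _ α.2 s, smul_mul_assoc, mul_smul_comm, one_mul, mul_one]
  show Q.binFunctional c ρ (r * (Q.x α - (genCoeff c ρ α : K) • 1) * s) = 0
  rw [mul_assoc, hcomm, ← mul_assoc]
  exact binFunctional_mul_x_sub_genCoeff hc hL α (r * s)

lemma binIdeal_ne_top (hc : Q.IsGoodC c) (hL : ∀ α ∈ L, Q.IsCentral α) :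
    Q.binIdeal c L ρ ≠ ⊤ := fun h =>
  one_ne_zero ((binFunctional_one hc).symm.trans
    (binFunctional_eq_zero_of_mem_binIdeal hc hL (by rw [h]; trivial)))

lemma x_sub_smul_one_mem_binIdeal_iff (hc : Q.IsGoodC c) (hL : ∀ α ∈ L, Q.IsCentral α)
    {γ : Fin n → ℤ} {μ : Kˣ} :
    Q.x γ - (μ : K) • 1 ∈ Q.binIdeal c L ρ ↔ ∃ h : γ ∈ L, μ = genCoeff c ρ ⟨γ, h⟩ := by
  refine ⟨fun hmem => ?_, fun ⟨h, hμ⟩ => hμ ▸ Q.x_sub_genCoeff_mem_binIdeal c ρ ⟨γ, h⟩⟩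
  have h0 := binFunctional_eq_zero_of_mem_binIdeal hc hL hmem
  rw [map_sub, map_smul, binFunctional_one hc, smul_eq_mul, mul_one, sub_eq_zero] at h0
  by_cases hγ : γ ∈ L
  · exact ⟨hγ, Units.ext (h0.symm.trans (binFunctional_x_of_mem hγ))⟩
  · exact absurd (h0.symm.trans (binFunctional_x_of_notMem hγ)) μ.ne_zero

lemma mem_iff_exists_x_sub_smul_one_mem_binIdeal (hc : Q.IsGoodC c)
    (hL : ∀ α ∈ L, Q.IsCentral α) {γ : Fin n → ℤ} :
    γ ∈ L ↔ ∃ μ : Kˣ, Q.x γ - (μ : K) • 1 ∈ Q.binIdeal c L ρ :=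
  ⟨fun h => ⟨_, Q.x_sub_genCoeff_mem_binIdeal c ρ ⟨γ, h⟩⟩,
    fun ⟨_, hμ⟩ => ((x_sub_smul_one_mem_binIdeal_iff hc hL).mp hμ).1⟩

variable (Q c ρ)

lemma isBinomialIdeal_binIdeal : Q.IsBinomialIdeal (Q.binIdeal c L ρ) := by
  refine ⟨{t | ∃ α : L, t = Q.x α - (genCoeff c ρ α : K) • 1} \ {0}, ?_, ?_⟩
  · rintro b ⟨⟨α, rfl⟩, hb0⟩
    exact ⟨hb0, 1, -(genCoeff c ρ α : K), α, 0,
      by rw [Q.x_zero, one_smul, neg_smul, sub_eq_add_neg]⟩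
  · refine le_antisymm (TwoSidedIdeal.span_le.mpr fun t ht => ?_)
      (TwoSidedIdeal.span_mono Set.sdiff_subset)
    by_cases h0 : t = 0
    · rw [h0]
      exact TwoSidedIdeal.zero_mem _
    · exact TwoSidedIdeal.subset_span ⟨ht, h0⟩

variable {Q c ρ}

lemma binIdeal_injective (hc : Q.IsGoodC c) :
    Function.Injective fun p : Q.LatticeChar => Q.binIdeal c p.1.1 p.2 := by
  rintro ⟨⟨L, hL⟩, ρ⟩ ⟨⟨L', hL'⟩, ρ'⟩ h
  dsimp only at h
  obtain rfl : L = L' := AddSubgroup.ext fun γ => by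
    rw [mem_iff_exists_x_sub_smul_one_mem_binIdeal hc hL, h,
      ← mem_iff_exists_x_sub_smul_one_mem_binIdeal hc hL']
  obtain rfl : ρ = ρ' := AddMonoidHom.ext fun α => by
    obtain ⟨_, hρ⟩ := (x_sub_smul_one_mem_binIdeal_iff hc hL).mp
      (h ▸ Q.x_sub_genCoeff_mem_binIdeal c ρ' α)
    exact (Additive.toMul.injective (mul_left_cancel hρ)).symm
  rfl

end binIdeal

section ofIdeal

variable (J : TwoSidedIdeal T)

lemma x_add_sub_smul_one_mem {α β : Fin n → ℤ} {a b : K} (ha : Q.x α - a • 1 ∈ J)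
    (hb : Q.x β - b • 1 ∈ J) : Q.x (α + β) - ((Q.d α β : K)⁻¹ * a * b) • 1 ∈ J := by
  have h := J.algebra_smul_mem (Q.d α β : K)⁻¹ (J.mul_sub_smul_one_mem ha hb)
  rwa [Q.x_mul, smul_sub, smul_smul, smul_smul, inv_mul_cancel₀ (Units.ne_zero _), one_smul,
    ← mul_assoc] at h

lemma x_neg_sub_smul_one_mem {α : Fin n → ℤ} {a : K} (ha : a ≠ 0) (h : Q.x α - a • 1 ∈ J) :
    Q.x (-α) - (a⁻¹ * Q.d (-α) α) • 1 ∈ J := by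
  convert J.algebra_smul_mem (-a⁻¹) (J.mul_mem_left (Q.x (-α)) _ h) using 1
  rw [mul_sub, Q.x_mul, neg_add_cancel, Q.x_zero, mul_smul_comm, mul_one, smul_sub, smul_smul,
    smul_smul, neg_mul, neg_mul, inv_mul_cancel₀ ha, neg_smul, neg_smul, one_smul]
  abel

def latticeOf : AddSubgroup (Fin n → ℤ) where
  carrier := {α | ∃ lam : Kˣ, Q.x α - (lam : K) • 1 ∈ J}
  zero_mem' := ⟨1, by simp [Q.x_zero]⟩
  add_mem' := by
    rintro α β ⟨a, ha⟩ ⟨b, hb⟩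
    exact ⟨(Q.d α β)⁻¹ * a * b, by simpa using Q.x_add_sub_smul_one_mem J ha hb⟩
  neg_mem' := by
    rintro α ⟨a, ha⟩
    exact ⟨a⁻¹ * Q.d (-α) α, by simpa using Q.x_neg_sub_smul_one_mem J a.ne_zero ha⟩

variable {Q J}

lemma isCentral_of_mem_latticeOf (hJ : J ≠ ⊤) {α : Fin n → ℤ} (hα : α ∈ Q.latticeOf J) :
    Q.IsCentral α :=
  let ⟨_, h⟩ := hα
  Q.isCentral_of_sub_smul_one_mem hJ h

variable (Q J)

noncomputable def scalarOf (α : Q.latticeOf J) : Kˣ := Classical.choose α.2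

lemma x_sub_scalarOf_mem (α : Q.latticeOf J) : Q.x α - (Q.scalarOf J α : K) • 1 ∈ J :=
  Classical.choose_spec α.2

variable {Q J}

lemma scalarOf_eq (hJ : J ≠ ⊤) {α : Q.latticeOf J} {μ : Kˣ} (h : Q.x α - (μ : K) • 1 ∈ J) :
    Q.scalarOf J α = μ :=
  Units.ext (J.eq_of_sub_smul_one_mem hJ (Q.x_sub_scalarOf_mem J α) h)

lemma scalarOf_add (hJ : J ≠ ⊤) (α β : Q.latticeOf J) :
    Q.scalarOf J (α + β) = (Q.d α β)⁻¹ * Q.scalarOf J α * Q.scalarOf J β :=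
  scalarOf_eq hJ (by
    simpa using Q.x_add_sub_smul_one_mem J (Q.x_sub_scalarOf_mem J α) (Q.x_sub_scalarOf_mem J β))

variable {c : (Fin n → ℤ) → Kˣ}

noncomputable def characterOf (hc : Q.IsGoodC c) (hJ : J ≠ ⊤) :
    Q.latticeOf J →+ Additive Kˣ :=
  AddMonoidHom.mk' (fun α => Additive.ofMul (c α * Q.scalarOf J α)) fun α β => by
    rw [← ofMul_mul]
    congr 1
    ext
    simp only [AddSubgroup.coe_add, Units.val_mul, Units.val_inv_eq_inv_val, scalarOf_add hJ,
      hc.c_add (isCentral_of_mem_latticeOf hJ α.2) (isCentral_of_mem_latticeOf hJ β.2)]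
    field_simp

lemma genCoeff_characterOf (hc : Q.IsGoodC c) (hJ : J ≠ ⊤) (α : Q.latticeOf J) :
    genCoeff c (characterOf hc hJ) α = Q.scalarOf J α :=
  inv_mul_cancel_left _ _

lemma binIdeal_characterOf (hc : Q.IsGoodC c) (hJ : J ≠ ⊤) (hJbin : Q.IsBinomialIdeal J) :
    Q.binIdeal c (Q.latticeOf J) (characterOf hc hJ) = J := by
  obtain ⟨S, hS, rfl⟩ := hJbin
  refine le_antisymm (TwoSidedIdeal.span_le.mpr ?_) (TwoSidedIdeal.span_le.mpr fun b hb => ?_)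
  · rintro _ ⟨α, rfl⟩
    show Q.x α - (genCoeff c (characterOf hc hJ) α : K) • 1 ∈ _
    rw [genCoeff_characterOf]
    exact Q.x_sub_scalarOf_mem _ α
  obtain ⟨-, l, m, α, β, rfl⟩ := hS b hb
  refine Q.binomial_mem_of_forall_sub_smul_one_mem (fun γ ν hν => ?_) (TwoSidedIdeal.subset_span hb)
  have hν0 : ν ≠ 0 := by
    rintro rfl
    exact hJ (Q.eq_top_of_x_mem _ (by simpa using hν))
  have hγ : γ ∈ Q.latticeOf _ := ⟨Units.mk0 ν hν0, hν⟩
  have hscalar : genCoeff c (characterOf hc hJ) ⟨γ, hγ⟩ = ν := by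
    rw [genCoeff_characterOf, scalarOf_eq hJ (μ := Units.mk0 ν hν0) hν, Units.val_mk0]
  simpa [hscalar] using Q.x_sub_genCoeff_mem_binIdeal c (characterOf hc hJ) ⟨γ, hγ⟩

end ofIdeal

end QuantumTorus

/-- The assignment `(L,ρ) ↦ I(L,ρ)` is a bijection from pairs of a sublattice
`L ≤ Γ_Z` together with `ρ ∈ Hom(L,Kˣ)` onto the proper binomial ideals of
`T_q`; the inverse sends `J` to `(L,ρ)` with `L = {α : x^α ∈ Kˣ + J}` and
`x^α - c(α)⁻¹ρ(α) ∈ J` for `α ∈ L`. -/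
theorem binIdeal_bijection {K : Type} [Field K] {n : ℕ} {T : Type} [Ring T]
    [Algebra K T] (Q : QuantumTorus K n T) (c : (Fin n → ℤ) → Kˣ) (hc : Q.IsGoodC c) :
    ∃ F : (Σ L : {L : AddSubgroup (Fin n → ℤ) // ∀ α ∈ L, Q.IsCentral α},
            (L.1 →+ Additive Kˣ)) ≃
          {J : TwoSidedIdeal T // J ≠ ⊤ ∧ Q.IsBinomialIdeal J},
      (∀ p, (F p : TwoSidedIdeal T) = Q.binIdeal c p.1.1 p.2) ∧
      (∀ J : {J : TwoSidedIdeal T // J ≠ ⊤ ∧ Q.IsBinomialIdeal J},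
        (((F.symm J).1.1 : Set (Fin n → ℤ)) =
          {α | ∃ lam : Kˣ, Q.x α - ((lam : K)) • (1 : T) ∈ (J : TwoSidedIdeal T)}) ∧
        ∀ α (hα : α ∈ (F.symm J).1.1),
          Q.x α - ((((c α)⁻¹ * Additive.toMul ((F.symm J).2 ⟨α, hα⟩) : Kˣ) : K)) • (1 : T)
            ∈ (J : TwoSidedIdeal T)) := by
  let F : Q.LatticeChar → {J : TwoSidedIdeal T // J ≠ ⊤ ∧ Q.IsBinomialIdeal J} := fun p =>
    ⟨Q.binIdeal c p.1.1 p.2, QuantumTorus.binIdeal_ne_top hc p.1.2,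
      Q.isBinomialIdeal_binIdeal c p.2⟩
  let G : {J : TwoSidedIdeal T // J ≠ ⊤ ∧ Q.IsBinomialIdeal J} → Q.LatticeChar := fun J =>
    ⟨⟨Q.latticeOf J, fun _ => QuantumTorus.isCentral_of_mem_latticeOf J.2.1⟩,
      QuantumTorus.characterOf hc J.2.1⟩
  have hFG : Function.LeftInverse F G := fun J =>
    Subtype.ext (QuantumTorus.binIdeal_characterOf hc J.2.1 J.2.2)
  have hF : Function.Injective F := fun p p' h =>
    QuantumTorus.binIdeal_injective hc (congrArg Subtype.val h)
  refine ⟨⟨F, G, hFG.rightInverse_of_injective hF, hFG⟩, fun p => rfl,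
    fun J => ⟨rfl, fun α hα => ?_⟩⟩
  have h := Q.x_sub_scalarOf_mem J ⟨α, hα⟩
  rw [← QuantumTorus.genCoeff_characterOf hc J.2.1] at h
  exact h
end

section
/- A unital affine K-algebra R is a binomial algebra (i.e., isomorphic to a quotient of some quantum affine space by a binomial ideal) if and only if R admits a grading by a commutative monoid S such that (1) every nonzero homogeneous component R_s is 1-dimensional over K, and (2) for all s,t ∈ S, R_s R_t = 0 if and only if R_t R_s = 0. -/
/-- A quantum affine space `O_q(Kⁿ)`: an algebra `A` with basis
`(x^α)_{α ∈ ℕⁿ}` and multiplication `x^α x^β = d(α,β) x^{α+β}` where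
`d(α,β) = ∏_{i>j} q_{ij}^{α_i β_j}` for a multiplicatively skew-symmetric
matrix `q`. -/
structure QuantumAffine (K : Type) [Field K] (n : ℕ) (A : Type) [Ring A] [Algebra K A] where
  q : Fin n → Fin n → Kˣ
  q_diag : ∀ i, q i i = 1
  q_skew : ∀ i j, q j i = (q i j)⁻¹
  d : (Fin n → ℕ) → (Fin n → ℕ) → Kˣ
  d_eq : ∀ α β, d α β = ∏ i : Fin n, ∏ j : Fin n,
      if (j : ℕ) < (i : ℕ) then q i j ^ (α i * β j) else 1
  x : (Fin n → ℕ) → A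
  basis : Module.Basis (Fin n → ℕ) K A
  basis_eq : ∀ α, basis α = x α
  x_mul : ∀ α β, x α * x β = ((d α β : K)) • x (α + β)
  x_zero : x 0 = 1

namespace QuantumAffine

variable {K : Type} [Field K] {n : ℕ} {A : Type} [Ring A] [Algebra K A]

/-- A binomial ideal of a quantum affine space: a two-sided ideal generated by
nonzero elements `λ x^α + μ x^β` with `α, β ∈ ℕⁿ`. -/
def IsBinomialIdeal (Q : QuantumAffine K n A) (B : TwoSidedIdeal A) : Prop :=
  ∃ S : Set A,
    (∀ b ∈ S, b ≠ 0 ∧ ∃ (l m : K) (α β : Fin n → ℕ), b = l • Q.x α + m • Q.x β) ∧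
    B = TwoSidedIdeal.span S

/-- The relation `α ∼ β ⟺ K·(x^α + B) = K·(x^β + B)` on `ℕⁿ`. -/
def rel (Q : QuantumAffine K n A) (B : TwoSidedIdeal A) (α β : Fin n → ℕ) : Prop :=
  (Q.x α ∈ B ∧ Q.x β ∈ B) ∨ ∃ lam : Kˣ, Q.x α - ((lam : K)) • Q.x β ∈ B

end QuantumAffine

/-!
If `ψ : O_q(Kⁿ) → R` is onto with binomial kernel `B`, grade `R` by `ℕⁿ` modulo
`α ∼ β ⟺ K ψ(x^α) = K ψ(x^β)`. This is a congruence because `ψ(x^α) ψ(x^β)` is a unit multiple of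
`ψ(x^{α+β})`; the components are the lines `K ψ(x^α)`, they multiply as
`R_s R_t = R_{s+t} = R_t R_s`, and they are independent because `B`, being spanned as a vector
space by the binomials it contains, is stable under the projections onto the degrees.

Conversely, homogeneous generators `y₁, …, yₘ` of `R` commute up to nonzero scalars by (1) and
(2), so `x^α ↦ y₁^{α₁} ⋯ yₘ^{αₘ}` defines a surjection from a quantum affine space. Its kernel is
spanned by binomials: it is the sum of its homogeneous parts, and in each degree all monomials are
sent into one line.
-/

open Submodule

lemma Module.Basis.map_mul_of_basis {ι K A B : Type*} [CommSemiring K] [Semiring A]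
    [Algebra K A] [Semiring B] [Algebra K B] (b : Module.Basis ι K A) (f : A →ₗ[K] B)
    (h : ∀ i j, f (b i * b j) = f (b i) * f (b j)) (x y : A) : f (x * y) = f x * f y :=
  LinearMap.congr_fun₂ (LinearMap.ext_basis (B := (LinearMap.mul K A).compr₂ f)
    (B' := (LinearMap.mul K B).compl₁₂ f f) b b h) x y

lemma Submodule.mul_mem_span_of_basis_left {ι K A : Type*} [CommSemiring K] [Semiring A]
    [Algebra K A] (b : Module.Basis ι K A) {s : Set A} (h : ∀ i, ∀ u ∈ s, b i * u ∈ span K s)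
    (a : A) {u : A} (hu : u ∈ span K s) : a * u ∈ span K s := by
  have hau := mul_mem_mul (b.span_eq ▸ mem_top : a ∈ span K (Set.range b)) hu
  rw [span_mul_span] at hau
  exact span_le.mpr (by rintro _ ⟨_, ⟨i, rfl⟩, v, hv, rfl⟩; exact h i v hv) hau

lemma Submodule.mul_mem_span_of_basis_right {ι K A : Type*} [CommSemiring K] [Semiring A]
    [Algebra K A] (b : Module.Basis ι K A) {s : Set A} (h : ∀ i, ∀ u ∈ s, u * b i ∈ span K s)
    (a : A) {u : A} (hu : u ∈ span K s) : u * a ∈ span K s := by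
  have hua := mul_mem_mul hu (b.span_eq ▸ mem_top : a ∈ span K (Set.range b))
  rw [span_mul_span] at hua
  exact span_le.mpr (by rintro _ ⟨v, hv, _, ⟨i, rfl⟩, rfl⟩; exact h i v hv) hua

lemma TwoSidedIdeal.mem_span_of_mem_submoduleSpan {K A : Type*} [CommRing K] [Ring A]
    [Algebra K A] {s : Set A} {u : A} (hu : u ∈ Submodule.span K s) :
    u ∈ TwoSidedIdeal.span s := by
  induction hu using Submodule.span_induction with
  | mem x hx => exact TwoSidedIdeal.subset_span hx
  | zero => exact TwoSidedIdeal.zero_mem _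
  | add x y _ _ hx hy => exact TwoSidedIdeal.add_mem _ hx hy
  | smul c x _ hx => exact Algebra.smul_def c x ▸ TwoSidedIdeal.mul_mem_left _ _ _ hx

lemma Submodule.disjoint_map_of_projection {R A M : Type*} [Ring R] [AddCommGroup A]
    [Module R A] [AddCommGroup M] [Module R M] (f : A →ₗ[R] M) (π : A →ₗ[R] A)
    {U V : Submodule R A} (hU : ∀ u ∈ U, π u = u) (hV : ∀ v ∈ V, π v = 0)
    (hker : ∀ a, f a = 0 → f (π a) = 0) : Disjoint (U.map f) (V.map f) := by
  rw [Submodule.disjoint_def]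
  rintro _ ⟨u, hu, rfl⟩ ⟨v, hv, hvu⟩
  have := hker (u - v) (by rw [map_sub, hvu, sub_self])
  rwa [map_sub, hU u hu, hV v hv, sub_zero] at this

section VectorSpace

variable {K V : Type*} [Field K] [AddCommGroup V] [Module K V]

lemma span_singleton_eq_or_smul_eq_zero {u v : V} {l m : K} (h : l • u + m • v = 0) :
    K ∙ u = K ∙ v ∨ (l • u = 0 ∧ m • v = 0) := by
  by_cases hlu : l • u = 0
  · exact Or.inr ⟨hlu, by simpa [hlu] using h⟩
  have hmv : m • v = (-l) • u := by rw [neg_smul]; exact eq_neg_of_add_eq_zero_right h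
  have hl : -l ≠ 0 := neg_ne_zero.mpr (left_ne_zero_of_smul hlu)
  have hm : m ≠ 0 := by rintro rfl; exact hlu (by simpa using hmv.symm)
  left
  calc K ∙ u = K ∙ ((-l) • u) := (span_singleton_smul_eq hl.isUnit u).symm
    _ = K ∙ (m • v) := by rw [hmv]
    _ = K ∙ v := span_singleton_smul_eq hm.isUnit v

lemma Submodule.IsPrincipal.eq_span_singleton_of_mem {W : Submodule K V} (hW : W.IsPrincipal)
    {u : V} (hu : u ∈ W) (hu0 : u ≠ 0) : W = K ∙ u := by
  obtain ⟨r, rfl⟩ := hW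
  obtain ⟨c, rfl⟩ := mem_span_singleton.mp hu
  exact (span_singleton_smul_eq (left_ne_zero_of_smul hu0).isUnit r).symm

lemma Submodule.IsPrincipal.exists_unit_smul_eq {W : Submodule K V} (hW : W.IsPrincipal)
    {u v : V} (hu : u ∈ W) (hv : v ∈ W) (hu0 : u ≠ 0) (hv0 : v ≠ 0) :
    ∃ c : Kˣ, v = (c : K) • u := by
  rw [hW.eq_span_singleton_of_mem hu hu0] at hv
  obtain ⟨c, rfl⟩ := mem_span_singleton.mp hv
  exact ⟨Units.mk0 c (left_ne_zero_of_smul hv0), rfl⟩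

end VectorSpace

section QCommutation

variable {K R : Type*} [CommSemiring K] [Semiring R] [Algebra K R]

lemma pow_mul_eq_smul_mul_pow {u v : R} {c : K} (h : u * v = c • (v * u)) (a : ℕ) :
    u ^ a * v = c ^ a • (v * u ^ a) := by
  induction a with
  | zero => simp
  | succ a ih =>
    rw [pow_succ, mul_assoc, h, mul_smul_comm, ← mul_assoc, ih, smul_mul_assoc, smul_smul,
      mul_assoc, ← pow_succ, ← pow_succ']

lemma pow_mul_pow_eq_smul_mul_pow {u v : R} {c : K} (h : u * v = c • (v * u)) (a b : ℕ) :
    u ^ a * v ^ b = c ^ (a * b) • (v ^ b * u ^ a) := by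
  induction b with
  | zero => simp
  | succ b ih =>
    rw [pow_succ, ← mul_assoc, ih, smul_mul_assoc, mul_assoc, pow_mul_eq_smul_mul_pow h,
      mul_smul_comm, smul_smul, ← mul_assoc, ← pow_succ, ← pow_add, mul_add_one]

lemma mul_prod_ofFn_eq_smul {k : ℕ} (u : R) (f : Fin k → R) (c : Fin k → K)
    (h : ∀ j, u * f j = c j • (f j * u)) :
    u * (List.ofFn f).prod = (∏ j, c j) • ((List.ofFn f).prod * u) := by
  induction k with
  | zero => simp
  | succ k ih =>
    rw [List.ofFn_succ, List.prod_cons, ← mul_assoc, h, smul_mul_assoc, mul_assoc,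
      ih _ _ fun j => h j.succ, mul_smul_comm, smul_smul, Fin.prod_univ_succ, ← mul_assoc]

end QCommutation

namespace QuantumAffine

section Twist

variable {K : Type*} [CommSemiring K] {m : ℕ} (q : Fin m → Fin m → Kˣ)

def twist (α β : Fin m → ℕ) : Kˣ :=
  ∏ i : Fin m, ∏ j : Fin m, if (j : ℕ) < (i : ℕ) then q i j ^ (α i * β j) else 1

lemma twist_add_left (α α' β : Fin m → ℕ) :
    twist q (α + α') β = twist q α β * twist q α' β := by
  simp only [twist, ← Finset.prod_mul_distrib]
  refine Finset.prod_congr rfl fun i _ => Finset.prod_congr rfl fun j _ => ?_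
  split_ifs <;> simp [add_mul, pow_add]

lemma twist_add_right (α β β' : Fin m → ℕ) :
    twist q α (β + β') = twist q α β * twist q α β' := by
  simp only [twist, ← Finset.prod_mul_distrib]
  refine Finset.prod_congr rfl fun i _ => Finset.prod_congr rfl fun j _ => ?_
  split_ifs <;> simp [mul_add, pow_add]

@[simp] lemma twist_zero_left (β : Fin m → ℕ) : twist q 0 β = 1 := by simp [twist]

@[simp] lemma twist_zero_right (α : Fin m → ℕ) : twist q α 0 = 1 := by simp [twist]

lemma twist_succ (q : Fin (m + 1) → Fin (m + 1) → Kˣ) (α β : Fin (m + 1) → ℕ) :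
    twist q α β = twist (fun i j => q i.castSucc j.castSucc) (fun i => α i.castSucc)
        (fun j => β j.castSucc) *
      ∏ j : Fin m, q (Fin.last m) j.castSucc ^ (α (Fin.last m) * β j.castSucc) := by
  have h : ∀ i : Fin m, ¬ Fin.last m < i.castSucc := fun i => not_lt.mpr (Fin.le_last _)
  simp [twist, Fin.prod_univ_castSucc, h]

end Twist

section Construction

/-! `O_q(Kᵐ)` is realised as the algebra of the operators `x^α · _` acting on its own underlying
space `(Fin m → ℕ) →₀ K`, so that associativity is inherited from `Module.End`. -/

variable {K : Type} [Field K] {m : ℕ} (q : Fin m → Fin m → Kˣ)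

noncomputable def twistedShift (α : Fin m → ℕ) : Module.End K ((Fin m → ℕ) →₀ K) :=
  Finsupp.linearCombination K fun β => Finsupp.single (α + β) (twist q α β : K)

lemma twistedShift_single (α β : Fin m → ℕ) (c : K) :
    twistedShift q α (Finsupp.single β c) = Finsupp.single (α + β) (twist q α β * c) := by
  simp [twistedShift, Finsupp.smul_single, mul_comm]

lemma twistedShift_mul (α β : Fin m → ℕ) :
    twistedShift q α * twistedShift q β = (twist q α β : K) • twistedShift q (α + β) := by
  refine Finsupp.lhom_ext fun γ c => ?_
  simp only [Module.End.mul_apply, LinearMap.smul_apply, twistedShift_single, Finsupp.smul_single,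
    smul_eq_mul, twist_add_left, twist_add_right, add_assoc, Units.val_mul]
  ring_nf

lemma twistedShift_zero : twistedShift q 0 = 1 :=
  Finsupp.lhom_ext fun β c => by simp [twistedShift_single]

lemma linearIndependent_twistedShift : LinearIndependent K (twistedShift q) := by
  refine LinearIndependent.of_comp (LinearMap.applyₗ (Finsupp.single 0 1)) ?_
  convert (Finsupp.basisSingleOne (R := K) (ι := Fin m → ℕ)).linearIndependent using 1
  ext1 α
  simp [twistedShift_single]

noncomputable def quantumAffineSpace : Subalgebra K (Module.End K ((Fin m → ℕ) →₀ K)) :=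
  (span K (Set.range (twistedShift q))).toSubalgebra (subset_span ⟨0, twistedShift_zero q⟩)
    fun f g hf hg => by
      have hfg := mul_mem_mul hf hg
      rw [span_mul_span] at hfg
      refine span_le.mpr ?_ hfg
      rintro _ ⟨_, ⟨α, rfl⟩, _, ⟨β, rfl⟩, rfl⟩
      change twistedShift q α * twistedShift q β ∈ _
      rw [twistedShift_mul]
      exact smul_mem _ _ (subset_span ⟨_, rfl⟩)

-- Instance search misses this: the additive group of `Finsupp` is not reducibly the additive
-- monoid that `Module.End.instSemiring` is built from.
noncomputable instance : Ring (quantumAffineSpace q) :=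
  @Subalgebra.toRing K _ _ Module.End.instRing _ (quantumAffineSpace q)

noncomputable def ofMatrix (hdiag : ∀ i, q i i = 1) (hskew : ∀ i j, q j i = (q i j)⁻¹) :
    QuantumAffine K m (quantumAffineSpace q) where
  q := q
  q_diag := hdiag
  q_skew := hskew
  d := twist q
  d_eq _ _ := rfl
  x α := ⟨twistedShift q α, subset_span ⟨α, rfl⟩⟩
  basis := Module.Basis.span (linearIndependent_twistedShift q)
  basis_eq := Module.Basis.span_apply (linearIndependent_twistedShift q)
  x_mul α β := Subtype.ext (twistedShift_mul q α β)
  x_zero := Subtype.ext (twistedShift_zero q)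

end Construction

end QuantumAffine

section OrderedMonomial

variable {K R : Type*} [CommSemiring K] [Semiring R] [Algebra K R] {m : ℕ}

def orderedMonomial (y : Fin m → R) (α : Fin m → ℕ) : R :=
  (List.ofFn fun i => y i ^ α i).prod

lemma orderedMonomial_succ (y : Fin (m + 1) → R) (α : Fin (m + 1) → ℕ) :
    orderedMonomial y α = orderedMonomial (fun i => y i.castSucc) (fun i => α i.castSucc) *
      y (Fin.last m) ^ α (Fin.last m) := by
  rw [orderedMonomial, List.ofFn_succ', List.prod_concat]
  rfl

@[simp] lemma orderedMonomial_zero (y : Fin m → R) : orderedMonomial y 0 = 1 := by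
  simp [orderedMonomial]

lemma orderedMonomial_single (y : Fin m → R) (i : Fin m) :
    orderedMonomial y (Pi.single i 1) = y i := by
  induction m with
  | zero => exact i.elim0
  | succ m ih =>
    rw [orderedMonomial_succ]
    induction i using Fin.lastCases with
    | last => simp [Fin.castSucc_ne_last, ← Pi.zero_def]
    | cast i =>
      convert ih (fun i => y i.castSucc) i using 1
      simp only [ne_eq, (Fin.castSucc_ne_last i).symm, not_false_eq_true, Pi.single_eq_of_ne,
        pow_zero, mul_one]
      congr 1
      ext j
      simp [Pi.single_apply]

open QuantumAffine in
lemma orderedMonomial_mul (q : Fin m → Fin m → Kˣ) (y : Fin m → R)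
    (hq : ∀ i j, y i * y j = (q i j : K) • (y j * y i)) (α β : Fin m → ℕ) :
    orderedMonomial y α * orderedMonomial y β = (twist q α β : K) • orderedMonomial y (α + β) := by
  induction m with
  | zero => simp [orderedMonomial, twist]
  | succ m ih =>
    have hcomm : y (Fin.last m) ^ α (Fin.last m) *
          orderedMonomial (fun i => y i.castSucc) (fun j => β j.castSucc) =
        (∏ j : Fin m, (q (Fin.last m) j.castSucc : K) ^ (α (Fin.last m) * β j.castSucc)) •
          (orderedMonomial (fun i => y i.castSucc) (fun j => β j.castSucc) *
            y (Fin.last m) ^ α (Fin.last m)) :=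
      mul_prod_ofFn_eq_smul _ _ _ fun j => pow_mul_pow_eq_smul_mul_pow (hq _ _) _ _
    rw [orderedMonomial_succ y α, orderedMonomial_succ y β, orderedMonomial_succ y (α + β),
      mul_assoc, ← mul_assoc (_ ^ _), hcomm, smul_mul_assoc, mul_smul_comm, ← mul_assoc,
      ← mul_assoc, ih (fun i j => q i.castSucc j.castSucc) _ (fun i j => hq _ _)]
    simp only [smul_mul_assoc, mul_assoc, ← pow_add, smul_smul, twist_succ]
    simp [mul_comm]
    rfl

end OrderedMonomial

namespace QuantumAffine

variable {K : Type} [Field K] {n : ℕ} {A : Type} [Ring A] [Algebra K A] {R : Type*} [Ring R]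
  [Algebra K R] (Q : QuantumAffine K n A)

lemma span_range_x : span K (Set.range Q.x) = ⊤ := by
  rw [← Q.basis.span_eq, funext Q.basis_eq]

lemma constr_x (f : (Fin n → ℕ) → R) (α : Fin n → ℕ) : Q.basis.constr K f (Q.x α) = f α := by
  rw [← Q.basis_eq, Module.Basis.constr_basis]

section Lift

variable (y : Fin n → R) (hy : ∀ i j, y i * y j = (Q.q i j : K) • (y j * y i))

noncomputable def lift : A →ₐ[K] R :=
  AlgHom.ofLinearMap (Q.basis.constr K (orderedMonomial y))
    (by rw [← Q.x_zero, constr_x, orderedMonomial_zero])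
    (Q.basis.map_mul_of_basis _ fun α β => by
      simp only [Q.basis_eq, Q.x_mul, map_smul, constr_x, Q.d_eq]
      rw [orderedMonomial_mul Q.q y hy]
      rfl)

@[simp] lemma lift_x (α : Fin n → ℕ) : Q.lift y hy (Q.x α) = orderedMonomial y α :=
  Q.constr_x _ α

lemma lift_surjective (hgen : Algebra.adjoin K (Set.range y) = ⊤) :
    Function.Surjective (Q.lift y hy) := by
  rw [← AlgHom.range_eq_top, eq_top_iff, ← hgen, Algebra.adjoin_le_iff]
  rintro _ ⟨i, rfl⟩
  exact ⟨Q.x (Pi.single i 1), (Q.lift_x y hy _).trans (orderedMonomial_single y i)⟩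

end Lift

section Binomial

def binomialsIn (B : Set A) : Set A :=
  {u | u ∈ B ∧ ∃ (l m : K) (α β : Fin n → ℕ), u = l • Q.x α + m • Q.x β}

lemma x_mul_binomial (γ α β : Fin n → ℕ) (l m : K) :
    Q.x γ * (l • Q.x α + m • Q.x β) =
      (l * Q.d γ α) • Q.x (γ + α) + (m * Q.d γ β) • Q.x (γ + β) := by
  simp only [mul_add, mul_smul_comm, Q.x_mul, smul_smul]

lemma binomial_mul_x (γ α β : Fin n → ℕ) (l m : K) :
    (l • Q.x α + m • Q.x β) * Q.x γ =
      (l * Q.d α γ) • Q.x (α + γ) + (m * Q.d β γ) • Q.x (β + γ) := by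
  simp only [add_mul, smul_mul_assoc, Q.x_mul, smul_smul]

lemma mem_span_binomialsIn_of_isBinomialIdeal {B : TwoSidedIdeal A} (hB : Q.IsBinomialIdeal B)
    {u : A} (hu : u ∈ B) : u ∈ span K (Q.binomialsIn B) := by
  obtain ⟨S, hS, rfl⟩ := hB
  have hbx : ∀ α, Q.basis α = Q.x α := Q.basis_eq
  induction hu using TwoSidedIdeal.span_induction with
  | mem x hx => exact subset_span ⟨TwoSidedIdeal.subset_span hx, (hS x hx).2⟩
  | zero => exact zero_mem _
  | add x y _ _ hx hy => exact add_mem hx hy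
  | neg x _ hx => exact neg_mem hx
  | left_absorb a x _ hx =>
    refine mul_mem_span_of_basis_left Q.basis ?_ a hx
    rintro γ _ ⟨hu, l, m, α, β, rfl⟩
    exact subset_span ⟨TwoSidedIdeal.mul_mem_left _ _ _ hu, _, _, _, _, by
      rw [hbx, x_mul_binomial]⟩
  | right_absorb a x _ hx =>
    refine mul_mem_span_of_basis_right Q.basis ?_ a hx
    rintro γ _ ⟨hu, l, m, α, β, rfl⟩
    exact subset_span ⟨TwoSidedIdeal.mul_mem_right _ _ _ hu, _, _, _, _, by
      rw [hbx, binomial_mul_x]⟩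

lemma isBinomialIdeal_iff {B : TwoSidedIdeal A} :
    Q.IsBinomialIdeal B ↔ ∀ u ∈ B, u ∈ span K (Q.binomialsIn B) := by
  refine ⟨fun hB u hu => Q.mem_span_binomialsIn_of_isBinomialIdeal hB hu, fun h => ?_⟩
  refine ⟨Q.binomialsIn B \ {0}, fun b hb => ⟨hb.2, hb.1.2⟩, le_antisymm (fun u hu => ?_) ?_⟩
  · rw [← span_sdiff_singleton_zero] at h
    exact TwoSidedIdeal.mem_span_of_mem_submoduleSpan (h u hu)
  · exact TwoSidedIdeal.span_le.mpr fun b hb => hb.1.1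

end Binomial

section LineGrading

variable (ψ : A →ₐ[K] R)

lemma span_map_x_add (α β : Fin n → ℕ) :
    K ∙ ψ (Q.x (α + β)) = (K ∙ ψ (Q.x α)) * (K ∙ ψ (Q.x β)) := by
  rw [span_mul_span, Set.singleton_mul_singleton, ← map_mul, Q.x_mul, map_smul,
    span_singleton_smul_eq (Q.d α β).isUnit]

/-- With `B = ker ψ`, this is the relation `rel` of the paper: `K (x^α + B) = K (x^β + B)`. -/
def lineCon : AddCon (Fin n → ℕ) where
  r α β := K ∙ ψ (Q.x α) = K ∙ ψ (Q.x β)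
  iseqv := ⟨fun _ => rfl, Eq.symm, Eq.trans⟩
  add' h h' := by simp only [span_map_x_add, h, h']

def lineGrading (s : (Q.lineCon ψ).Quotient) : Submodule K R :=
  AddCon.liftOn s (fun α => K ∙ ψ (Q.x α)) fun _ _ h => h

lemma lineGrading_coe (α : Fin n → ℕ) : Q.lineGrading ψ α = K ∙ ψ (Q.x α) := rfl

lemma lineGrading_add (s t : (Q.lineCon ψ).Quotient) :
    Q.lineGrading ψ (s + t) = Q.lineGrading ψ s * Q.lineGrading ψ t := by
  induction s, t using AddCon.induction_on₂ with
  | H α β => exact Q.span_map_x_add ψ α β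

lemma one_mem_lineGrading_zero : (1 : R) ∈ Q.lineGrading ψ 0 := by
  rw [← AddCon.coe_zero, lineGrading_coe, Q.x_zero, map_one]
  exact mem_span_singleton_self 1

lemma mul_mem_lineGrading {s t : (Q.lineCon ψ).Quotient} {a b : R}
    (ha : a ∈ Q.lineGrading ψ s) (hb : b ∈ Q.lineGrading ψ t) :
    a * b ∈ Q.lineGrading ψ (s + t) :=
  Q.lineGrading_add ψ s t ▸ mul_mem_mul ha hb

lemma exists_lineGrading_eq_span_singleton (s : (Q.lineCon ψ).Quotient) :
    Q.lineGrading ψ s ≠ ⊥ → ∃ r : R, r ≠ 0 ∧ Q.lineGrading ψ s = K ∙ r := by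
  induction s using AddCon.induction_on with
  | H α => exact fun h =>
    ⟨ψ (Q.x α), fun h0 => h (by rw [lineGrading_coe, h0, span_zero_singleton]), rfl⟩

lemma lineGrading_mul_eq_zero_comm (s t : (Q.lineCon ψ).Quotient) :
    (∀ a ∈ Q.lineGrading ψ s, ∀ b ∈ Q.lineGrading ψ t, a * b = 0) ↔
      (∀ a ∈ Q.lineGrading ψ s, ∀ b ∈ Q.lineGrading ψ t, b * a = 0) := by
  have key : ∀ s t, (∀ a ∈ Q.lineGrading ψ s, ∀ b ∈ Q.lineGrading ψ t, a * b = 0) ↔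
      Q.lineGrading ψ (s + t) = ⊥ := by
    intro s t
    simp only [lineGrading_add, eq_bot_iff, mul_le, mem_bot]
  rw [key, add_comm, ← key]
  exact forall₂_comm

lemma iSup_lineGrading (hψ : Function.Surjective ψ) : ⨆ s, Q.lineGrading ψ s = ⊤ := by
  refine eq_top_iff.mpr fun r _ => ?_
  obtain ⟨a, rfl⟩ := hψ r
  have hle : (span K (Set.range Q.x)).map ψ.toLinearMap ≤ ⨆ s, Q.lineGrading ψ s := by
    rw [map_span, span_le]
    rintro _ ⟨_, ⟨α, rfl⟩, rfl⟩
    exact mem_iSup_of_mem (α : (Q.lineCon ψ).Quotient) (mem_span_singleton_self _)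
  exact hle (mem_map_of_mem (Q.span_range_x ▸ mem_top))

open Classical in
noncomputable def degreeProj (s : (Q.lineCon ψ).Quotient) : A →ₗ[K] A :=
  Q.basis.constr K fun α => if (α : (Q.lineCon ψ).Quotient) = s then Q.x α else 0

open Classical in
lemma degreeProj_x (s : (Q.lineCon ψ).Quotient) (α : Fin n → ℕ) :
    Q.degreeProj ψ s (Q.x α) = if (α : (Q.lineCon ψ).Quotient) = s then Q.x α else 0 :=
  Q.constr_x _ α

/-- A binomial in `ker ψ` either has both monomials in one degree or has both terms in
`ker ψ`. -/
lemma map_degreeProj_eq_zero (hB : Q.IsBinomialIdeal (TwoSidedIdeal.ker ψ))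
    (s : (Q.lineCon ψ).Quotient) {a : A} (ha : ψ a = 0) : ψ (Q.degreeProj ψ s a) = 0 := by
  have hspan := Q.mem_span_binomialsIn_of_isBinomialIdeal hB ((TwoSidedIdeal.mem_ker ψ).mpr ha)
  suffices span K (Q.binomialsIn (TwoSidedIdeal.ker ψ)) ≤
      LinearMap.ker (ψ.toLinearMap ∘ₗ Q.degreeProj ψ s) from this hspan
  rw [span_le]
  rintro _ ⟨hu, l, m, α, β, rfl⟩
  rw [SetLike.mem_coe, TwoSidedIdeal.mem_ker ψ, map_add, map_smul, map_smul] at hu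
  simp only [SetLike.mem_coe, LinearMap.mem_ker, LinearMap.comp_apply, map_add, map_smul,
    degreeProj_x, AlgHom.toLinearMap_apply]
  rcases span_singleton_eq_or_smul_eq_zero (K := K) (V := R) hu with h | ⟨hα, hβ⟩
  · have hαβ : (α : (Q.lineCon ψ).Quotient) = β := (AddCon.eq _).mpr h
    split_ifs <;> simp_all
  · split_ifs <;> simp [hα, hβ]

lemma lineGrading_le_map_span {s : (Q.lineCon ψ).Quotient} {C : Set (Fin n → ℕ)}
    (hC : ∀ α : Fin n → ℕ, (α : (Q.lineCon ψ).Quotient) = s → α ∈ C) :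
    Q.lineGrading ψ s ≤ (span K (Q.x '' C)).map ψ.toLinearMap := by
  induction s using AddCon.induction_on with
  | H α =>
    rw [lineGrading_coe, span_singleton_le_iff_mem]
    exact mem_map_of_mem (subset_span ⟨α, hC α rfl, rfl⟩)

lemma iSupIndep_lineGrading (hB : Q.IsBinomialIdeal (TwoSidedIdeal.ker ψ)) :
    iSupIndep (Q.lineGrading ψ) := by
  refine iSupIndep_def.mpr fun s => ?_
  have hU : ∀ u ∈ span K (Q.x '' {α | (α : (Q.lineCon ψ).Quotient) = s}),
      Q.degreeProj ψ s u = u := by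
    refine fun u hu => LinearMap.eqOn_span' (g := LinearMap.id) ?_ hu
    rintro _ ⟨α, hα, rfl⟩
    simp [degreeProj_x, hα.out]
  have hV : ∀ v ∈ span K (Q.x '' {α | (α : (Q.lineCon ψ).Quotient) ≠ s}),
      Q.degreeProj ψ s v = 0 := by
    refine fun v hv => (span_le (p := LinearMap.ker (Q.degreeProj ψ s))).mpr ?_ hv
    rintro _ ⟨α, hα, rfl⟩
    simp [degreeProj_x, hα.out]
  refine (disjoint_map_of_projection ψ.toLinearMap _ hU hV
    fun a => Q.map_degreeProj_eq_zero ψ hB s).mono ?_ (iSup₂_le fun t ht => ?_)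
  · exact Q.lineGrading_le_map_span ψ fun _ h => h
  · exact Q.lineGrading_le_map_span ψ fun _ h => h.trans_ne ht

end LineGrading

section Kernel

variable (ψ : A →ₐ[K] R)

lemma map_eq_zero_of_mem_span_binomialsIn {u : A}
    (hu : u ∈ span K (Q.binomialsIn (TwoSidedIdeal.ker ψ))) : ψ u = 0 :=
  (span_le (p := LinearMap.ker ψ.toLinearMap)).mpr
    (fun _ hb => (TwoSidedIdeal.mem_ker ψ).mp hb.1) hu

/-- All `ψ (x^α)`, `α ∈ C`, are multiples `c_α • ψ (x^α₀)` of a single nonzero one, so `u` is a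
combination of the binomials `x^α - c_α • x^α₀ ∈ ker ψ` and of `x^α₀`, whose coefficient must
vanish. -/
lemma mem_span_binomialsIn_of_mem_span_x {C : Set (Fin n → ℕ)} {W : Submodule K R}
    (hW : W.IsPrincipal) (hC : ∀ α ∈ C, ψ (Q.x α) ∈ W) {u : A} (hu : u ∈ span K (Q.x '' C))
    (hψu : ψ u = 0) : u ∈ span K (Q.binomialsIn (TwoSidedIdeal.ker ψ)) := by
  by_cases h0 : ∀ α ∈ C, ψ (Q.x α) = 0
  · refine span_le.mpr ?_ hu
    rintro _ ⟨α, hα, rfl⟩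
    exact subset_span ⟨(TwoSidedIdeal.mem_ker ψ).mpr (h0 α hα), 1, 0, α, α, by simp⟩
  push Not at h0
  obtain ⟨α₀, hα₀, hne⟩ := h0
  have hle : span K (Q.x '' C) ≤ span K (Q.binomialsIn (TwoSidedIdeal.ker ψ)) ⊔ K ∙ Q.x α₀ := by
    refine span_le.mpr ?_
    rintro _ ⟨α, hα, rfl⟩
    obtain ⟨c, hc⟩ := mem_span_singleton.mp
      ((hW.eq_span_singleton_of_mem (hC α₀ hα₀) hne) ▸ hC α hα)
    have hbin : Q.x α - c • Q.x α₀ ∈ Q.binomialsIn (TwoSidedIdeal.ker ψ) :=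
      ⟨by simp [TwoSidedIdeal.mem_ker, hc], 1, -c, α, α₀, by simp [sub_eq_add_neg]⟩
    rw [← sub_add_cancel (Q.x α) (c • Q.x α₀)]
    exact add_mem (mem_sup_left (subset_span hbin))
      (mem_sup_right (smul_mem _ _ (mem_span_singleton_self _)))
  obtain ⟨p, hp, _, hc, rfl⟩ := mem_sup.mp (hle hu)
  obtain ⟨c, rfl⟩ := mem_span_singleton.mp hc
  rw [map_add, Q.map_eq_zero_of_mem_span_binomialsIn ψ hp, zero_add, map_smul,
    smul_eq_zero] at hψu
  rw [hψu.resolve_right hne, zero_smul, add_zero]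
  exact hp

lemma isBinomialIdeal_ker_of_mem_graded {S : Type*} [AddCommMonoid S] {w : S → Submodule K R}
    (hind : iSupIndep w) (hprinc : ∀ s, (w s).IsPrincipal) (g : (Fin n → ℕ) → S)
    (hψ : ∀ α, ψ (Q.x α) ∈ w (g α)) : Q.IsBinomialIdeal (TwoSidedIdeal.ker ψ) := by
  rw [isBinomialIdeal_iff]
  intro u hu
  have hsup : u ∈ ⨆ s, span K (Q.x '' (g ⁻¹' {s})) := by
    rw [iSup_span, ← Set.image_iUnion, ← Set.preimage_iUnion, Set.iUnion_of_singleton,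
      Set.preimage_univ, Set.image_univ, Q.span_range_x]
    exact mem_top
  obtain ⟨F, hF, rfl⟩ := (mem_iSup_iff_exists_finsupp _ u).mp hsup
  have hFw : ∀ s, ψ (F s) ∈ w s := fun s =>
    (span_le (p := (w s).comap ψ.toLinearMap)).mpr (by rintro _ ⟨α, rfl, rfl⟩; exact hψ α) (hF s)
  have hF0 := (iSupIndep_iff_finsetSum_eq_zero_imp_eq_zero w).mp hind F.support
    (fun s => ψ (F s)) (fun s _ => hFw s) (by rw [← map_sum]; exact (TwoSidedIdeal.mem_ker ψ).mp hu)
  exact sum_mem fun s hs => Q.mem_span_binomialsIn_of_mem_span_x ψ (hprinc s)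
    (fun α (hα : g α = s) => hα ▸ hψ α) (hF s) (hF0 s hs)

end Kernel

end QuantumAffine

section GradedAlgebra

variable {K R S : Type*} [Field K] [Ring R] [Algebra K R] [AddCommMonoid S]
  {w : S → Submodule K R}

lemma forall_mem_span_singleton_mul_eq_zero_iff {u v : R} :
    (∀ a ∈ K ∙ u, ∀ b ∈ K ∙ v, a * b = 0) ↔ u * v = 0 := by
  refine ⟨fun h => h u (mem_span_singleton_self u) v (mem_span_singleton_self v), ?_⟩
  intro h a ha b hb
  obtain ⟨c, rfl⟩ := mem_span_singleton.mp ha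
  obtain ⟨d, rfl⟩ := mem_span_singleton.mp hb
  rw [smul_mul_smul_comm, h, smul_zero]

lemma exists_unit_mul_eq_smul_mul (hprinc : ∀ s, (w s).IsPrincipal)
    (hmul : ∀ s t : S, ∀ a ∈ w s, ∀ b ∈ w t, a * b ∈ w (s + t))
    (hzero : ∀ s t : S, (∀ a ∈ w s, ∀ b ∈ w t, a * b = 0) ↔ (∀ a ∈ w s, ∀ b ∈ w t, b * a = 0))
    {s t : S} {u v : R} (hu : u ∈ w s) (hv : v ∈ w t) : ∃ c : Kˣ, u * v = (c : K) • (v * u) := by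
  rcases eq_or_ne u 0 with rfl | hu0
  · exact ⟨1, by simp⟩
  rcases eq_or_ne v 0 with rfl | hv0
  · exact ⟨1, by simp⟩
  have hsymm : u * v = 0 ↔ v * u = 0 := by
    have := hzero s t
    rwa [(hprinc s).eq_span_singleton_of_mem hu hu0, (hprinc t).eq_span_singleton_of_mem hv hv0,
      forall_mem_span_singleton_mul_eq_zero_iff, forall₂_comm,
      forall_mem_span_singleton_mul_eq_zero_iff] at this
  by_cases huv : u * v = 0
  · exact ⟨1, by rw [huv, hsymm.mp huv, smul_zero]⟩
  exact (hprinc (s + t)).exists_unit_smul_eq (add_comm s t ▸ hmul t s v hv u hu)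
    (hmul s t u hu v hv) (mt hsymm.mpr huv) huv

lemma orderedMonomial_mem_graded [SetLike.GradedMonoid w] {m : ℕ} {y : Fin m → R}
    {σ : Fin m → S} (hy : ∀ i, y i ∈ w (σ i)) (α : Fin m → ℕ) :
    orderedMonomial y α ∈ w (∑ i, α i • σ i) := by
  have := SetLike.list_prod_ofFn_mem_graded (A := w) (fun i => α i • σ i) _
    fun i => SetLike.pow_mem_graded _ (hy i)
  rwa [List.sum_ofFn] at this

end GradedAlgebra

lemma exists_homogeneous_generators {K R S : Type*} [Field K] [Ring R] [Algebra K R]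
    [Algebra.FiniteType K R] {w : S → Submodule K R} (htop : ⨆ s, w s = ⊤) :
    ∃ (m : ℕ) (y : Fin m → R) (σ : Fin m → S),
      (∀ i, y i ∈ w (σ i)) ∧ Algebra.adjoin K (Set.range y) = ⊤ := by
  classical
  obtain ⟨G, hG⟩ := Algebra.FiniteType.out (R := K) (A := R)
  have hspan : ∀ g : R, ∃ T : Finset R,
      (T : Set R) ⊆ ⋃ s, (w s : Set R) ∧ g ∈ span K (T : Set R) :=
    fun g => mem_span_finite_of_mem_span (by rw [← iSup_eq_span, htop]; exact mem_top)
  choose T hTw hgT using hspan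
  obtain ⟨m, y, -, hy⟩ := (G.biUnion T).finite_toSet.fin_param
  have hyw : ∀ i, ∃ s, y i ∈ w s := fun i => by
    have hi : y i ∈ (G.biUnion T : Set R) := hy ▸ Set.mem_range_self i
    simp only [Finset.coe_biUnion, Set.mem_iUnion] at hi
    obtain ⟨g, -, hg⟩ := hi
    exact Set.mem_iUnion.mp (hTw g hg)
  choose σ hσ using hyw
  refine ⟨m, y, σ, hσ, eq_top_iff.mpr ?_⟩
  rw [← hG, Algebra.adjoin_le_iff]
  intro g hg
  refine Algebra.span_le_adjoin K _ (span_mono ?_ (hgT g))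
  rw [hy]
  exact Finset.coe_subset.mpr (Finset.subset_biUnion_of_mem T hg)

lemma exists_skew_commutation_matrix {K R ι : Type*} [Field K] [Ring R] [Algebra K R]
    [LinearOrder ι] (y : ι → R) (h : ∀ i j, ∃ c : Kˣ, y i * y j = (c : K) • (y j * y i)) :
    ∃ q : ι → ι → Kˣ, (∀ i, q i i = 1) ∧ (∀ i j, q j i = (q i j)⁻¹) ∧
      ∀ i j, y i * y j = (q i j : K) • (y j * y i) := by
  choose c hc using h
  refine ⟨fun i j => if i < j then c i j else if j < i then (c j i)⁻¹ else 1, by simp,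
    fun i j => ?_, fun i j => ?_⟩
  · rcases lt_trichotomy i j with hij | rfl | hij
    · simp only [hij, hij.not_gt, if_true, if_false]
    · simp
    · simp only [hij, hij.not_gt, if_true, if_false, inv_inv]
  · rcases lt_trichotomy i j with hij | rfl | hij
    · simp only [hij, if_true]
      exact hc i j
    · simp
    · simp only [hij.not_gt, hij, if_true, if_false]
      rw [hc j i, smul_smul, ← Units.val_mul, inv_mul_cancel, Units.val_one, one_smul]

/-- A unital affine `K`-algebra is a binomial algebra (a quotient of a quantum
affine space by a binomial ideal) iff it admits a grading by a commutative
monoid whose nonzero homogeneous components are 1-dimensional and such that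
`R_s R_t = 0 ↔ R_t R_s = 0`. -/
theorem binomial_algebra_iff_graded {K : Type} [Field K]
    (R : Type) [Ring R] [Algebra K R] [Algebra.FiniteType K R] :
    (∃ (m : ℕ) (A : Type) (_ : Ring A) (_ : Algebra K A)
        (Q : QuantumAffine K m A) (B : TwoSidedIdeal A),
        Q.IsBinomialIdeal B ∧
        ∃ ψ : A →ₐ[K] R, Function.Surjective ψ ∧ ∀ a : A, ψ a = 0 ↔ a ∈ B) ↔
    (∃ (S : Type) (_ : AddCommMonoid S) (w : S → Submodule K R),
        iSupIndep w ∧ (⨆ s, w s) = ⊤ ∧ (1 : R) ∈ w 0 ∧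
        (∀ s t : S, ∀ a ∈ w s, ∀ b ∈ w t, a * b ∈ w (s + t)) ∧
        (∀ s : S, w s ≠ ⊥ → ∃ r : R, r ≠ 0 ∧ w s = Submodule.span K {r}) ∧
        (∀ s t : S, (∀ a ∈ w s, ∀ b ∈ w t, a * b = 0) ↔
          (∀ a ∈ w s, ∀ b ∈ w t, b * a = 0))) := by
  constructor
  · rintro ⟨m, A, _, _, Q, B, hB, ψ, hψ, hker⟩
    obtain rfl : B = TwoSidedIdeal.ker ψ :=
      TwoSidedIdeal.ext fun a => by rw [TwoSidedIdeal.mem_ker, hker]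
    exact ⟨_, inferInstance, Q.lineGrading ψ, Q.iSupIndep_lineGrading ψ hB,
      Q.iSup_lineGrading ψ hψ, Q.one_mem_lineGrading_zero ψ,
      fun _ _ _ ha _ hb => Q.mul_mem_lineGrading ψ ha hb,
      Q.exists_lineGrading_eq_span_singleton ψ, Q.lineGrading_mul_eq_zero_comm ψ⟩
  · rintro ⟨S, _, w, hind, htop, hone, hmul, hdim, hzero⟩
    have hprinc : ∀ s, (w s).IsPrincipal := fun s => by
      by_cases h : w s = ⊥
      · rw [h]; exact bot_isPrincipal
      · obtain ⟨r, -, hr⟩ := hdim s h; exact ⟨r, hr⟩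
    have : SetLike.GradedMonoid w :=
      { one_mem := hone, mul_mem := fun _ _ _ _ ha hb => hmul _ _ _ ha _ hb }
    obtain ⟨m, y, σ, hyσ, hgen⟩ := exists_homogeneous_generators htop
    obtain ⟨q, hdiag, hskew, hq⟩ := exists_skew_commutation_matrix y fun i j =>
      exists_unit_mul_eq_smul_mul hprinc hmul hzero (hyσ i) (hyσ j)
    let Q := QuantumAffine.ofMatrix q hdiag hskew
    refine ⟨m, _, _, _, Q, TwoSidedIdeal.ker (Q.lift y hq), ?_, Q.lift y hq,
      Q.lift_surjective y hq hgen, fun a => (TwoSidedIdeal.mem_ker _).symm⟩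
    exact Q.isBinomialIdeal_ker_of_mem_graded _ hind hprinc (fun α => ∑ i, α i • σ i) fun α =>
      (Q.lift_x y hq α).symm ▸ orderedMonomial_mem_graded hyσ α
end
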